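/- arXiv:1403.3777 — 2 statements merged into one kernel-verified Lean document; each statement's English description precedes it below -/
import Mathlib

section
/- Let (e_i) be an unconditional and democratic Schauder basis of a Banach space X. Then for every ε > 0 there is an equivalent norm on X with respect to which (e_i) is normalized, 1-unconditional and (1+ε)-democratic. -/
open scoped BigOperators

section CommonDefs

variable {X : Type*} [NormedAddCommGroup X] [NormedSpace ℝ X]

/-- `(e, coord)` is a Schauder basis of `X` with biorthogonal functionals `coord`:
the functionals are biorthogonal to the basis vectors and every `x` is the limit of the
partial sums of its expansion `Σ coord i x • e i`. -/
structure IsSchauderBasis (e : ℕ → X) (coord : ℕ → X →L[ℝ] ℝ) : Prop where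
  biorth : ∀ i j, coord i (e j) = if i = j then 1 else 0
  expansion : ∀ x : X,
    Filter.Tendsto (fun n => ∑ i ∈ Finset.range n, coord i x • e i)
      Filter.atTop (nhds x)

/-- The best `m`-term approximation error `σ_m(x)` w.r.t. the norm `nn`. -/
noncomputable def bestApprox (e : ℕ → X) (nn : X → ℝ) (m : ℕ) (x : X) : ℝ :=
  sInf { r | ∃ (A : Finset ℕ) (a : ℕ → ℝ), A.card ≤ m ∧
    r = nn (x - ∑ i ∈ A, a i • e i) }

/-- `A` is a set of coordinates of `x` of largest modulus (a greedy set):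
the `m`-th greedy approximant of `x` is `∑ i ∈ A, coord i x • e i` for a greedy set of
cardinality `m`. -/
def GreedySet (coord : ℕ → X →L[ℝ] ℝ) (x : X) (A : Finset ℕ) : Prop :=
  ∀ i ∈ A, ∀ j ∉ A, |coord j x| ≤ |coord i x|

/-- The basis `(e, coord)` is `C`-greedy w.r.t. the norm `nn`:
`‖x - G_m(x)‖ ≤ C σ_m(x)` for every `x` and `m` (for any choice of `m`-th greedy
approximant `G_m(x)`). -/
def IsGreedyWith (e : ℕ → X) (coord : ℕ → X →L[ℝ] ℝ) (nn : X → ℝ) (C : ℝ) : Prop :=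
  ∀ (x : X) (m : ℕ) (A : Finset ℕ), A.card = m → GreedySet coord x A →
    nn (x - ∑ i ∈ A, coord i x • e i) ≤ C * bestApprox e nn m x

/-- Suppression `K`-unconditionality w.r.t. the norm `nn`. -/
def IsSuppressionUnconditionalWith (e : ℕ → X) (nn : X → ℝ) (K : ℝ) : Prop :=
  ∀ (s A : Finset ℕ) (a : ℕ → ℝ), A ⊆ s →
    nn (∑ i ∈ A, a i • e i) ≤ K * nn (∑ i ∈ s, a i • e i)

/-- `K`-unconditionality w.r.t. the norm `nn`. -/
def IsUnconditionalWith (e : ℕ → X) (nn : X → ℝ) (K : ℝ) : Prop :=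
  ∀ (s : Finset ℕ) (a b : ℕ → ℝ), (∀ i, |a i| ≤ |b i|) →
    nn (∑ i ∈ s, a i • e i) ≤ K * nn (∑ i ∈ s, b i • e i)

/-- `Δ`-democracy w.r.t. the norm `nn`. -/
def IsDemocraticWith (e : ℕ → X) (nn : X → ℝ) (Δ : ℝ) : Prop :=
  ∀ A B : Finset ℕ, A.card ≤ B.card →
    nn (∑ i ∈ A, e i) ≤ Δ * nn (∑ i ∈ B, e i)

/-- The basis is normalized w.r.t. the norm `nn`. -/
def IsNormalizedWith (e : ℕ → X) (nn : X → ℝ) : Prop :=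
  ∀ i, nn (e i) = 1

/-- The basis is seminormalized. -/
def IsSeminormalized (e : ℕ → X) : Prop :=
  ∃ c C : ℝ, 0 < c ∧ ∀ i, c ≤ ‖e i‖ ∧ ‖e i‖ ≤ C

/-- The fundamental function `φ(n) = sup_{|A| ≤ n} ‖Σ_{i∈A} e_i‖` w.r.t. the norm `nn`. -/
noncomputable def fundFn (e : ℕ → X) (nn : X → ℝ) (n : ℕ) : ℝ :=
  sSup { r | ∃ A : Finset ℕ, A.card ≤ n ∧ r = nn (∑ i ∈ A, e i) }

/-- The dual norm (w.r.t. `nn`) of `∑_{i∈A} e_i^*`. -/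
noncomputable def dualNormFinset (coord : ℕ → X →L[ℝ] ℝ) (nn : X → ℝ) (A : Finset ℕ) : ℝ :=
  sSup { r | ∃ x : X, nn x ≤ 1 ∧ r = |∑ i ∈ A, coord i x| }

/-- The dual fundamental function `φ*(n) = sup_{|A| ≤ n} ‖Σ_{i∈A} e_i^*‖*` w.r.t. `nn`. -/
noncomputable def dualFundFn (coord : ℕ → X →L[ℝ] ℝ) (nn : X → ℝ) (n : ℕ) : ℝ :=
  sSup { r | ∃ A : Finset ℕ, A.card ≤ n ∧ r = dualNormFinset coord nn A }

/-- `Δ`-bidemocracy w.r.t. the norm `nn`: `φ(n) φ*(n) ≤ Δ n` for all `n`. -/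
def IsBidemocraticWith (e : ℕ → X) (coord : ℕ → X →L[ℝ] ℝ) (nn : X → ℝ) (Δ : ℝ) : Prop :=
  ∀ n : ℕ, fundFn e nn n * dualFundFn coord nn n ≤ Δ * n

/-- `nn` is a norm on `X` equivalent to the original norm. -/
def IsEquivNorm (nn : X → ℝ) : Prop :=
  (∀ x y : X, nn (x + y) ≤ nn x + nn y) ∧
  (∀ (a : ℝ) (x : X), nn (a • x) = |a| * nn x) ∧
  ∃ c C : ℝ, 0 < c ∧ ∀ x : X, c * ‖x‖ ≤ nn x ∧ nn x ≤ C * ‖x‖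

/-- The (finitely supported) vector `Σ_i f i • e i` with coefficients `f ∈ c₀₀`. -/
noncomputable def finVec (e : ℕ → X) (f : ℕ →₀ ℝ) : X :=
  f.sum fun i c => c • e i

/-- `y = w + t` is a greedy rearrangement of `x = w + u`: the coefficient sequences
`w, u, t` have pairwise disjoint supports, `|supp u| = |supp t|`, and
`‖w‖_∞ ≤ |u_i| = |t_j|` for all `i ∈ supp u`, `j ∈ supp t`. -/
def IsGreedyRearrangement (w u t : ℕ →₀ ℝ) : Prop :=
  Disjoint w.support u.support ∧ Disjoint w.support t.support ∧
  Disjoint u.support t.support ∧ u.support.card = t.support.card ∧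
  (∀ i ∈ u.support, ∀ j ∈ t.support, |u i| = |t j|) ∧
  (∀ n : ℕ, ∀ i ∈ u.support, |w n| ≤ |u i|)

end CommonDefs

section FundDefs

/-- A fundamental (quasi-concave) function on `[1, ∞)`: positive, increasing, and
`x ↦ φ(x)/x` is decreasing. -/
def IsFundamentalFunction (φ : ℝ → ℝ) : Prop :=
  (∀ x : ℝ, 1 ≤ x → 0 < φ x) ∧
  (∀ x y : ℝ, 1 ≤ x → x ≤ y → φ x ≤ φ y) ∧
  (∀ x y : ℝ, 1 ≤ x → x ≤ y → φ y / y ≤ φ x / x)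

/-- `δ_φ(y) = liminf_{x→∞} φ(yx)/(y φ(x))`. -/
noncomputable def deltaFn (φ : ℝ → ℝ) (y : ℝ) : ℝ :=
  Filter.liminf (fun x : ℝ => φ (y * x) / (y * φ x)) Filter.atTop

/-- `δ(φ) = inf_{y ≥ 1} δ_φ(y)`. -/
noncomputable def deltaParam (φ : ℝ → ℝ) : ℝ :=
  sInf { d | ∃ y : ℝ, 1 ≤ y ∧ d = deltaFn φ y }

/-- Equivalence of fundamental functions. -/
def FundEquiv (φ ψ : ℝ → ℝ) : Prop :=
  ∃ a b : ℝ, 0 < a ∧ 0 < b ∧ ∀ x : ℝ, 1 ≤ x → a * φ x ≤ ψ x ∧ ψ x ≤ b * φ x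

end FundDefs

/-!
First replace the norm by the lattice hull `N x = sup ‖∑ i ∈ s, a i • e i‖` over the coefficients
with `‖a i • e i‖ ≤ |e_i^*(x)|`. Unconditionality makes `N` an equivalent norm, and it is
normalized, monotone in the moduli of the coordinates, and still democratic; its fundamental
function `φ` is quasi-concave (`φ n / n` is antitone).

Then take the largest seminorm below `C N` under which every atom `∑ i ∈ A, c i • e i` with
`|c i| ≤ μ` has norm at most `μ φ |A|`, namely the infimum over decompositions
`x = r + ∑ atoms` of `C N r + ∑ μ φ |A|`. It is still normalized and `1`-unconditional, and
`‖∑ i ∈ A, e i‖ ≤ φ |A|`. Conversely, in a decomposition of `∑ i ∈ B, e i`, the coordinates where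
`|e_i^*(r)| ≥ δ` are paid for by `C N r` as soon as `C ≥ D / δ` (democracy), while the others are
covered by atoms of total height `≥ 1 - δ`, which by quasi-concavity costs their share of
`(1 - δ) φ |B|`. So `‖∑ i ∈ B, e i‖ ≥ (1 - δ) φ |B|`, and `δ = ε / (1 + ε)` gives
`(1 + ε)`-democracy.
-/

open Filter
open scoped Pointwise

lemma IsDemocraticWith.norm_le {X : Type*} [NormedAddCommGroup X] {e : ℕ → X} {Δ : ℝ}
    (h : IsDemocraticWith e (‖·‖) Δ) (i j : ℕ) : ‖e i‖ ≤ Δ * ‖e j‖ := by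
  simpa using h {i} {j} le_rfl

section Basics

variable {X : Type*} [NormedAddCommGroup X] [NormedSpace ℝ X] {e : ℕ → X}
  {coord : ℕ → X →L[ℝ] ℝ}

lemma IsSchauderBasis.coord_sum (hb : IsSchauderBasis e coord) (A : Finset ℕ) (a : ℕ → ℝ)
    (j : ℕ) : coord j (∑ i ∈ A, a i • e i) = if j ∈ A then a j else 0 := by
  simp [hb.biorth]

lemma IsSchauderBasis.coord_sum_one (hb : IsSchauderBasis e coord) (A : Finset ℕ) (j : ℕ) :
    coord j (∑ i ∈ A, e i) = if j ∈ A then 1 else 0 := by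
  simpa using hb.coord_sum A 1 j

lemma IsSchauderBasis.ne_zero (hb : IsSchauderBasis e coord) (i : ℕ) : e i ≠ 0 := fun h => by
  simpa [h] using hb.biorth i i

lemma IsDemocraticWith.exists_of_isEquivNorm {Δ : ℝ} {nn : X → ℝ}
    (h : IsDemocraticWith e (‖·‖) Δ) (hnn : IsEquivNorm nn) : ∃ Δ', IsDemocraticWith e nn Δ' := by
  obtain ⟨-, -, c, C, hc, hcC⟩ := hnn
  refine ⟨|C| * |Δ| / c, fun A B hAB => ?_⟩
  have hB : ‖∑ i ∈ B, e i‖ ≤ nn (∑ i ∈ B, e i) / c := by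
    rw [le_div_iff₀ hc, mul_comm]; exact (hcC _).1
  calc nn (∑ i ∈ A, e i) ≤ |C| * ‖∑ i ∈ A, e i‖ :=
        (hcC _).2.trans (mul_le_mul_of_nonneg_right (le_abs_self C) (norm_nonneg _))
    _ ≤ |C| * (|Δ| * ‖∑ i ∈ B, e i‖) := by
        gcongr
        exact (h A B hAB).trans (mul_le_mul_of_nonneg_right (le_abs_self Δ) (norm_nonneg _))
    _ ≤ |C| * (|Δ| * (nn (∑ i ∈ B, e i) / c)) := by gcongr
    _ = |C| * |Δ| / c * nn (∑ i ∈ B, e i) := by ring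

lemma Seminorm.isEquivNorm (p : Seminorm ℝ X) {a b : ℝ} (ha : 0 < a)
    (h : ∀ x, a * ‖x‖ ≤ p x ∧ p x ≤ b * ‖x‖) : IsEquivNorm p :=
  ⟨map_add_le_add p, fun c x => by rw [map_smul_eq_mul, Real.norm_eq_abs], a, b, ha, h⟩

end Basics

section LatticeHull

variable {X : Type*} [NormedAddCommGroup X] [NormedSpace ℝ X] {e : ℕ → X}
  {coord : ℕ → X →L[ℝ] ℝ}

def latticeHullSet (e : ℕ → X) (coord : ℕ → X →L[ℝ] ℝ) (x : X) : Set ℝ :=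
  {r | ∃ (s : Finset ℕ) (a : ℕ → ℝ), (∀ i, ‖a i • e i‖ ≤ |coord i x|) ∧
    r = ‖∑ i ∈ s, a i • e i‖}

noncomputable def latticeHull (e : ℕ → X) (coord : ℕ → X →L[ℝ] ℝ) (x : X) : ℝ :=
  sSup (latticeHullSet e coord x)

lemma zero_mem_latticeHullSet (x : X) : (0 : ℝ) ∈ latticeHullSet e coord x :=
  ⟨∅, 0, by simp, by simp⟩

lemma latticeHull_nonneg {x : X} (hx : BddAbove (latticeHullSet e coord x)) :
    0 ≤ latticeHull e coord x :=
  le_csSup hx (zero_mem_latticeHullSet x)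

lemma latticeHull_le_mul {x y : X} (hx : BddAbove (latticeHullSet e coord x)) {T : ℝ}
    (hT : 0 ≤ T) (h : ∀ i, |coord i y| ≤ T * |coord i x|) :
    latticeHull e coord y ≤ T * latticeHull e coord x := by
  refine csSup_le ⟨0, zero_mem_latticeHullSet y⟩ ?_
  rintro _ ⟨s, a, ha, rfl⟩
  rcases hT.eq_or_lt with rfl | hT
  · have hzero : ∀ i, a i • e i = 0 := fun i =>
      norm_le_zero_iff.1 ((ha i).trans (by simpa using h i))
    simp [hzero]
  have hmem : ‖∑ i ∈ s, (T⁻¹ * a i) • e i‖ ∈ latticeHullSet e coord x := by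
    refine ⟨s, _, fun i => ?_, rfl⟩
    rw [mul_smul, norm_smul, Real.norm_of_nonneg (inv_nonneg.2 hT.le), inv_mul_le_iff₀ hT]
    exact (ha i).trans (h i)
  have hsum : ∑ i ∈ s, a i • e i = T • ∑ i ∈ s, (T⁻¹ * a i) • e i := by
    simp [Finset.smul_sum, smul_smul, hT.ne']
  rw [hsum, norm_smul, Real.norm_of_nonneg hT.le]
  exact mul_le_mul_of_nonneg_left (le_csSup hx hmem) hT.le

lemma exists_norm_smul_le_and_norm_sub_smul_le (z : X) {a u v : ℝ} (hu : 0 ≤ u) (hv : 0 ≤ v)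
    (h : ‖a • z‖ ≤ u + v) : ∃ b : ℝ, ‖b • z‖ ≤ u ∧ ‖(a - b) • z‖ ≤ v := by
  by_cases hau : ‖a • z‖ ≤ u
  · exact ⟨a, hau, by simpa using hv⟩
  push Not at hau
  have hpos : 0 < ‖a • z‖ := hu.trans_lt hau
  refine ⟨(u / ‖a • z‖) * a, ?_, ?_⟩
  · rw [mul_smul, norm_smul, Real.norm_of_nonneg (by positivity), div_mul_cancel₀ _ hpos.ne']
  · rw [show a - u / ‖a • z‖ * a = (1 - u / ‖a • z‖) * a by ring, mul_smul, norm_smul,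
      Real.norm_of_nonneg (sub_nonneg.2 ((div_le_one hpos).2 hau.le)), sub_mul,
      div_mul_cancel₀ _ hpos.ne']
    linarith

lemma latticeHull_add_le {x y : X} (hx : BddAbove (latticeHullSet e coord x))
    (hy : BddAbove (latticeHullSet e coord y)) :
    latticeHull e coord (x + y) ≤ latticeHull e coord x + latticeHull e coord y := by
  refine csSup_le ⟨0, zero_mem_latticeHullSet _⟩ ?_
  rintro _ ⟨s, a, ha, rfl⟩
  choose b hbx hby using fun i => exists_norm_smul_le_and_norm_sub_smul_le (e i)
    (abs_nonneg (coord i x)) (abs_nonneg (coord i y))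
    ((ha i).trans (by simpa using abs_add_le (coord i x) (coord i y)))
  have hsplit : ∑ i ∈ s, a i • e i = ∑ i ∈ s, b i • e i + ∑ i ∈ s, (a i - b i) • e i := by
    simp [sub_smul]
  rw [hsplit]
  exact (norm_add_le _ _).trans (add_le_add (le_csSup hx ⟨s, b, hbx, rfl⟩)
    (le_csSup hy ⟨s, fun i => a i - b i, hby, rfl⟩))

lemma le_of_mem_latticeHullSet (hb : IsSchauderBasis e coord) {K : ℝ}
    (hK : IsUnconditionalWith e (‖·‖) K) {c : ℝ} (hc : 0 < c) (hlo : ∀ i, c ≤ ‖e i‖) {x : X}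
    {r : ℝ} (hr : r ∈ latticeHullSet e coord x) : r ≤ K / c * ‖x‖ := by
  classical
  obtain ⟨s, a, ha, rfl⟩ := hr
  obtain ⟨n, hn⟩ := s.exists_nat_subset_range
  have hlim : Tendsto (fun m => K / c * ‖∑ i ∈ Finset.range m, coord i x • e i‖) atTop
      (nhds (K / c * ‖x‖)) :=
    (hb.expansion x).norm.const_mul _
  refine ge_of_tendsto hlim (eventually_atTop.2 ⟨n, fun m hm => ?_⟩)
  have hsub : s ⊆ Finset.range m := hn.trans (Finset.range_subset_range.2 hm)
  have hcoef : ∀ i, |if i ∈ s then a i else 0| ≤ |c⁻¹ * coord i x| := by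
    intro i
    split_ifs
    · rw [abs_mul, abs_inv, abs_of_pos hc, le_inv_mul_iff₀ hc]
      calc c * |a i| ≤ ‖e i‖ * |a i| := mul_le_mul_of_nonneg_right (hlo i) (abs_nonneg _)
        _ ≤ |coord i x| := by simpa [norm_smul, mul_comm] using ha i
    · rw [abs_zero]; exact abs_nonneg _
  calc ‖∑ i ∈ s, a i • e i‖ = ‖∑ i ∈ Finset.range m, (if i ∈ s then a i else 0) • e i‖ := by
        simp [ite_smul, Finset.sum_ite_mem, Finset.inter_eq_right.2 hsub]
    _ ≤ K * ‖∑ i ∈ Finset.range m, (c⁻¹ * coord i x) • e i‖ := hK _ _ _ hcoef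
    _ = K / c * ‖∑ i ∈ Finset.range m, coord i x • e i‖ := by
        simp [mul_smul, ← Finset.smul_sum, norm_smul, abs_of_pos hc, div_eq_mul_inv, mul_assoc]

lemma bddAbove_latticeHullSet (hb : IsSchauderBasis e coord) {K : ℝ}
    (hK : IsUnconditionalWith e (‖·‖) K) {c : ℝ} (hc : 0 < c) (hlo : ∀ i, c ≤ ‖e i‖) (x : X) :
    BddAbove (latticeHullSet e coord x) :=
  ⟨_, fun _ => le_of_mem_latticeHullSet hb hK hc hlo⟩

lemma latticeHull_le_mul_norm (hb : IsSchauderBasis e coord) {K : ℝ}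
    (hK : IsUnconditionalWith e (‖·‖) K) {c : ℝ} (hc : 0 < c) (hlo : ∀ i, c ≤ ‖e i‖) (x : X) :
    latticeHull e coord x ≤ K / c * ‖x‖ :=
  csSup_le ⟨0, zero_mem_latticeHullSet x⟩ fun _ => le_of_mem_latticeHullSet hb hK hc hlo

lemma norm_le_mul_latticeHull (hb : IsSchauderBasis e coord) {x : X}
    (hx : BddAbove (latticeHullSet e coord x)) {C : ℝ} (hC : 0 < C) (hup : ∀ i, ‖e i‖ ≤ C) :
    ‖x‖ ≤ C * latticeHull e coord x := by
  refine le_of_tendsto (hb.expansion x).norm (Eventually.of_forall fun n => ?_)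
  have hmem : ‖∑ i ∈ Finset.range n, (C⁻¹ * coord i x) • e i‖ ∈ latticeHullSet e coord x := by
    refine ⟨_, _, fun i => ?_, rfl⟩
    rw [norm_smul, Real.norm_eq_abs, abs_mul, abs_inv, abs_of_pos hC, mul_assoc,
      inv_mul_le_iff₀ hC, mul_comm C]
    exact mul_le_mul_of_nonneg_left (hup i) (abs_nonneg _)
  calc ‖∑ i ∈ Finset.range n, coord i x • e i‖
      = C * ‖∑ i ∈ Finset.range n, (C⁻¹ * coord i x) • e i‖ := by
        simp [mul_smul, ← Finset.smul_sum, norm_smul, abs_of_pos hC, hC.ne']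
    _ ≤ C * latticeHull e coord x := mul_le_mul_of_nonneg_left (le_csSup hx hmem) hC.le

lemma latticeHull_apply_e (hb : IsSchauderBasis e coord) {j : ℕ}
    (hbdd : BddAbove (latticeHullSet e coord (e j))) : latticeHull e coord (e j) = 1 := by
  have hcoord : ∀ i, |coord i (e j)| = if i = j then 1 else 0 := fun i => by
    rw [hb.biorth]; split_ifs <;> simp
  refine le_antisymm (csSup_le ⟨0, zero_mem_latticeHullSet _⟩ ?_)
    (le_csSup hbdd ⟨{j}, fun i => if i = j then ‖e j‖⁻¹ else 0, fun i => ?_, ?_⟩)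
  · rintro _ ⟨s, a, ha, rfl⟩
    calc ‖∑ i ∈ s, a i • e i‖ ≤ ∑ i ∈ s, ‖a i • e i‖ := norm_sum_le _ _
      _ ≤ ∑ i ∈ s, if i = j then (1 : ℝ) else 0 :=
        Finset.sum_le_sum fun i _ => (ha i).trans (hcoord i).le
      _ ≤ 1 := by rw [Finset.sum_ite_eq']; split_ifs <;> norm_num
  · rw [hcoord]
    split_ifs with h
    · simp [h, norm_smul, hb.ne_zero j]
    · simp [h]
  · simp [norm_smul, hb.ne_zero j]

noncomputable def latticeHullSeminorm (e : ℕ → X) (coord : ℕ → X →L[ℝ] ℝ)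
    (hbdd : ∀ x, BddAbove (latticeHullSet e coord x)) : Seminorm ℝ X :=
  Seminorm.ofSMulLE (latticeHull e coord)
    (le_antisymm (by simpa using latticeHull_le_mul (y := 0) (hbdd 0) le_rfl (by simp))
      (latticeHull_nonneg (hbdd 0)))
    (fun x y => latticeHull_add_le (hbdd x) (hbdd y))
    (fun a x => latticeHull_le_mul (hbdd x) (norm_nonneg a) (by simp [abs_mul]))

@[simp]
lemma latticeHullSeminorm_apply (hbdd : ∀ x, BddAbove (latticeHullSet e coord x)) (x : X) :
    latticeHullSeminorm e coord hbdd x = latticeHull e coord x :=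
  rfl

end LatticeHull

section CoordMonotone

variable {X : Type*} [NormedAddCommGroup X] [NormedSpace ℝ X] {e : ℕ → X}
  {coord : ℕ → X →L[ℝ] ℝ}

def IsCoordMonotone (coord : ℕ → X →L[ℝ] ℝ) (N : X → ℝ) : Prop :=
  ∀ x y, (∀ i, |coord i y| ≤ |coord i x|) → N y ≤ N x

lemma isCoordMonotone_latticeHullSeminorm (hbdd : ∀ x, BddAbove (latticeHullSet e coord x)) :
    IsCoordMonotone coord (latticeHullSeminorm e coord hbdd) := fun x y h => by
  simpa using latticeHull_le_mul (hbdd x) zero_le_one (by simpa using h)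

lemma IsCoordMonotone.le_mul {N : Seminorm ℝ X} (hN : IsCoordMonotone coord N) {x y : X}
    {T : ℝ} (hT : 0 ≤ T) (h : ∀ i, |coord i y| ≤ T * |coord i x|) : N y ≤ T * N x := by
  have := hN (T • x) y (by simpa [abs_mul, abs_of_nonneg hT] using h)
  rwa [map_smul_eq_mul, Real.norm_of_nonneg hT] at this

lemma IsCoordMonotone.isUnconditionalWith_one {N : X → ℝ} (hb : IsSchauderBasis e coord)
    (hN : IsCoordMonotone coord N) :
    IsUnconditionalWith e N 1 := fun s a b hab => by
  rw [one_mul]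
  refine hN _ _ fun i => ?_
  rw [hb.coord_sum, hb.coord_sum]
  split_ifs
  exacts [hab i, le_rfl]

end CoordMonotone

section FundamentalFunction

variable {X : Type*} [NormedAddCommGroup X] [NormedSpace ℝ X] {e : ℕ → X}
  {N : Seminorm ℝ X} {D : ℝ}

lemma fundFn_le {n : ℕ} {c : ℝ} (h : ∀ A : Finset ℕ, A.card ≤ n → N (∑ i ∈ A, e i) ≤ c) :
    fundFn e N n ≤ c :=
  csSup_le ⟨_, ∅, by simp, rfl⟩ (by rintro _ ⟨A, hA, rfl⟩; exact h A hA)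

lemma le_fundFn (hdem : IsDemocraticWith e N D) {A : Finset ℕ} {n : ℕ} (h : A.card ≤ n) :
    N (∑ i ∈ A, e i) ≤ fundFn e N n := by
  refine le_csSup ⟨D * N (∑ i ∈ Finset.range n, e i), ?_⟩ ⟨A, h, rfl⟩
  rintro _ ⟨B, hB, rfl⟩
  exact hdem B _ (by simpa using hB)

lemma fundFn_le_mul (hdem : IsDemocraticWith e N D) {n : ℕ} {B : Finset ℕ} (h : n ≤ B.card) :
    fundFn e N n ≤ D * N (∑ i ∈ B, e i) :=
  fundFn_le fun A hA => hdem A B (hA.trans h)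

lemma fundFn_nonneg (hdem : IsDemocraticWith e N D) (n : ℕ) : 0 ≤ fundFn e N n := by
  simpa using le_fundFn hdem (A := ∅) (Nat.zero_le n)

lemma fundFn_mono (hdem : IsDemocraticWith e N D) {m n : ℕ} (h : m ≤ n) :
    fundFn e N m ≤ fundFn e N n :=
  fundFn_le fun _ hA => le_fundFn hdem (hA.trans h)

lemma fundFn_zero (hdem : IsDemocraticWith e N D) : fundFn e N 0 = 0 :=
  le_antisymm (fundFn_le fun A hA => by simp [Finset.card_eq_zero.1 (Nat.le_zero.1 hA)])
    (fundFn_nonneg hdem 0)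

lemma fundFn_one (hdem : IsDemocraticWith e N D) (hnorm : IsNormalizedWith e N) :
    fundFn e N 1 = 1 := by
  refine le_antisymm (fundFn_le fun A hA => ?_)
    (by simpa [hnorm 0] using le_fundFn (A := {0}) hdem le_rfl)
  obtain ⟨a, ha⟩ := Finset.card_le_one_iff_subset_singleton.1 hA
  rcases Finset.subset_singleton_iff.1 ha with rfl | rfl
  · simp
  · simp [hnorm a]

/-- Averaging over the `b + 1` subsets of `A` of size `b`. -/
lemma natCast_mul_le_fundFn (hdem : IsDemocraticWith e N D) {A : Finset ℕ} {b : ℕ}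
    (hA : A.card = b + 1) : (b : ℝ) * N (∑ i ∈ A, e i) ≤ (b + 1) * fundFn e N b := by
  classical
  have hsum : ∑ i ∈ A, ∑ j ∈ A.erase i, e j = (b : ℝ) • ∑ j ∈ A, e j := by
    rw [Finset.sum_congr rfl fun i hi => Finset.sum_erase_eq_sub hi, Finset.sum_sub_distrib,
      Finset.sum_const, hA, succ_nsmul, add_sub_cancel_right, Nat.cast_smul_eq_nsmul]
  calc (b : ℝ) * N (∑ i ∈ A, e i) = N (∑ i ∈ A, ∑ j ∈ A.erase i, e j) := by
        rw [hsum, map_smul_eq_mul, Real.norm_natCast]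
    _ ≤ ∑ i ∈ A, N (∑ j ∈ A.erase i, e j) :=
        Finset.le_sum_of_subadditive N (map_zero N).le (map_add_le_add N) _ _
    _ ≤ ∑ _i ∈ A, fundFn e N b :=
        Finset.sum_le_sum fun i hi => le_fundFn hdem (by simp [Finset.card_erase_of_mem hi, hA])
    _ = (b + 1) * fundFn e N b := by simp [hA]

lemma natCast_mul_fundFn_succ_le (hdem : IsDemocraticWith e N D) (b : ℕ) :
    (b : ℝ) * fundFn e N (b + 1) ≤ (b + 1) * fundFn e N b := by
  rcases b.eq_zero_or_pos with rfl | hb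
  · simpa using fundFn_nonneg hdem 0
  have hb' : (0 : ℝ) < b := by exact_mod_cast hb
  rw [← le_div_iff₀' hb']
  refine fundFn_le fun A hA => ?_
  rcases Nat.le_succ_iff.1 hA with hA | hA
  · rw [le_div_iff₀' hb']
    nlinarith [le_fundFn hdem hA, fundFn_nonneg hdem b]
  · rw [le_div_iff₀' hb']
    exact natCast_mul_le_fundFn hdem hA

lemma natCast_mul_fundFn_le (hdem : IsDemocraticWith e N D) {k n : ℕ} (h : k ≤ n) :
    (k : ℝ) * fundFn e N n ≤ n * fundFn e N k := by
  induction n, h using Nat.le_induction with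
  | base => exact le_rfl
  | succ n hkn ih =>
    rcases n.eq_zero_or_pos with rfl | hn
    · obtain rfl : k = 0 := Nat.le_zero.1 hkn
      simpa using fundFn_nonneg hdem 0
    have hn' : (0 : ℝ) < n := by exact_mod_cast hn
    refine le_of_mul_le_mul_left ?_ hn'
    push_cast
    calc (n : ℝ) * (k * fundFn e N (n + 1)) = k * (n * fundFn e N (n + 1)) := by ring
      _ ≤ k * ((n + 1) * fundFn e N n) :=
          mul_le_mul_of_nonneg_left (natCast_mul_fundFn_succ_le hdem n) (Nat.cast_nonneg k)
      _ = (n + 1) * (k * fundFn e N n) := by ring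
      _ ≤ (n + 1) * (n * fundFn e N k) := mul_le_mul_of_nonneg_left ih (by positivity)
      _ = n * ((n + 1) * fundFn e N k) := by ring

end FundamentalFunction

structure Atom where
  height : ℝ
  supp : Finset ℕ
  coeff : ℕ → ℝ
  abs_coeff_le : ∀ i, |coeff i| ≤ height

namespace Atom

variable {X : Type*} [NormedAddCommGroup X] {e : ℕ → X} (p : Atom)

noncomputable def cost (e : ℕ → X) (N : X → ℝ) (p : Atom) : ℝ :=
  p.height * fundFn e N p.supp.card

lemma height_nonneg : 0 ≤ p.height :=
  (abs_nonneg _).trans (p.abs_coeff_le 0)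

def mulCoeff (t : ℕ → ℝ) {T : ℝ} (ht : ∀ i, |t i| ≤ T) : Atom where
  height := T * p.height
  supp := p.supp
  coeff i := t i * p.coeff i
  abs_coeff_le i := by
    rw [abs_mul]
    exact mul_le_mul (ht i) (p.abs_coeff_le i) (abs_nonneg _) ((abs_nonneg _).trans (ht i))

lemma cost_mulCoeff {N : X → ℝ} {t : ℕ → ℝ} {T : ℝ} (ht : ∀ i, |t i| ≤ T) :
    (p.mulCoeff t ht).cost e N = T * p.cost e N :=
  mul_assoc _ _ _

variable [NormedSpace ℝ X] {coord : ℕ → X →L[ℝ] ℝ}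

def vec (e : ℕ → X) (p : Atom) : X :=
  ∑ i ∈ p.supp, p.coeff i • e i

lemma coord_vec (hb : IsSchauderBasis e coord) (j : ℕ) :
    coord j (p.vec e) = if j ∈ p.supp then p.coeff j else 0 :=
  hb.coord_sum _ _ j

lemma abs_coord_vec_le (hb : IsSchauderBasis e coord) (j : ℕ) :
    |coord j (p.vec e)| ≤ if j ∈ p.supp then p.height else 0 := by
  rw [p.coord_vec hb]
  split_ifs
  exacts [p.abs_coeff_le j, by simp]

lemma coord_mulCoeff_vec (hb : IsSchauderBasis e coord) {t : ℕ → ℝ} {T : ℝ}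
    (ht : ∀ i, |t i| ≤ T) (j : ℕ) :
    coord j ((p.mulCoeff t ht).vec e) = t j * coord j (p.vec e) := by
  rw [coord_vec _ hb, coord_vec _ hb, mul_ite, mul_zero]
  rfl

lemma seminorm_vec_le_cost {N : Seminorm ℝ X} {D : ℝ} (hb : IsSchauderBasis e coord)
    (hmono : IsCoordMonotone coord N) (hdem : IsDemocraticWith e N D) :
    N (p.vec e) ≤ p.cost e N := by
  calc N (p.vec e) ≤ p.height * N (∑ i ∈ p.supp, e i) := by
        refine hmono.le_mul p.height_nonneg fun j => (p.abs_coord_vec_le hb j).trans ?_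
        rw [hb.coord_sum_one]
        split_ifs <;> simp
    _ ≤ p.cost e N := mul_le_mul_of_nonneg_left (le_fundFn hdem le_rfl) p.height_nonneg

end Atom

section DecompositionNorm

variable {X : Type*} [NormedAddCommGroup X] [NormedSpace ℝ X] {e : ℕ → X}
  {coord : ℕ → X →L[ℝ] ℝ} {N : Seminorm ℝ X} {C D : ℝ}

lemma exists_eq_mul_and_abs_le {u v T : ℝ} (hT : 0 ≤ T) (h : |v| ≤ T * |u|) :
    ∃ t, v = t * u ∧ |t| ≤ T := by
  rcases eq_or_ne u 0 with rfl | hu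
  · exact ⟨0, by simpa using h, by simpa using hT⟩
  refine ⟨v / u, (div_mul_cancel₀ v hu).symm, ?_⟩
  rwa [abs_div, div_le_iff₀ (abs_pos.2 hu)]

def decompCosts (e : ℕ → X) (N : X → ℝ) (C : ℝ) (x : X) : Set ℝ :=
  {c | ∃ (r : X) (l : Multiset Atom), x = r + (l.map (Atom.vec e)).sum ∧
    C * N r + (l.map (Atom.cost e N)).sum ≤ c}

noncomputable def decompNorm (e : ℕ → X) (N : X → ℝ) (C : ℝ) (x : X) : ℝ :=
  sInf (decompCosts e N C x)

lemma mul_mem_decompCosts (x : X) : C * N x ∈ decompCosts e N C x :=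
  ⟨x, 0, by simp, by simp⟩

lemma seminorm_le_of_mem_decompCosts (hb : IsSchauderBasis e coord)
    (hmono : IsCoordMonotone coord N) (hdem : IsDemocraticWith e N D) (hC : 1 ≤ C) {x : X}
    {c : ℝ} (hc : c ∈ decompCosts e N C x) : N x ≤ c := by
  obtain ⟨r, l, rfl, hc⟩ := hc
  have hl : N (l.map (Atom.vec e)).sum ≤ (l.map (Atom.cost e N)).sum := by
    refine (Multiset.le_sum_of_subadditive N (map_zero N).le (map_add_le_add N) _).trans ?_
    rw [Multiset.map_map]
    exact Multiset.sum_map_le_sum_map _ _ fun p _ => p.seminorm_vec_le_cost hb hmono hdem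
  have hr : N r ≤ C * N r := le_mul_of_one_le_left (apply_nonneg N r) hC
  linarith [map_add_le_add N r (l.map (Atom.vec e)).sum]

lemma bddBelow_decompCosts (hb : IsSchauderBasis e coord) (hmono : IsCoordMonotone coord N)
    (hdem : IsDemocraticWith e N D) (hC : 1 ≤ C) (x : X) : BddBelow (decompCosts e N C x) :=
  ⟨0, fun _ hc => (apply_nonneg N x).trans (seminorm_le_of_mem_decompCosts hb hmono hdem hC hc)⟩

lemma seminorm_le_decompNorm (hb : IsSchauderBasis e coord) (hmono : IsCoordMonotone coord N)
    (hdem : IsDemocraticWith e N D) (hC : 1 ≤ C) (x : X) : N x ≤ decompNorm e N C x :=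
  le_csInf ⟨_, mul_mem_decompCosts x⟩ fun _ => seminorm_le_of_mem_decompCosts hb hmono hdem hC

lemma decompNorm_le_mul_seminorm (hb : IsSchauderBasis e coord)
    (hmono : IsCoordMonotone coord N) (hdem : IsDemocraticWith e N D) (hC : 1 ≤ C) (x : X) :
    decompNorm e N C x ≤ C * N x :=
  csInf_le (bddBelow_decompCosts hb hmono hdem hC x) (mul_mem_decompCosts x)

lemma decompCosts_add_subset (hC : 0 ≤ C) (x y : X) :
    decompCosts e N C x + decompCosts e N C y ⊆ decompCosts e N C (x + y) := by
  rintro _ ⟨c₁, ⟨r₁, l₁, rfl, h₁⟩, c₂, ⟨r₂, l₂, rfl, h₂⟩, rfl⟩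
  refine ⟨r₁ + r₂, l₁ + l₂, by simp only [Multiset.map_add, Multiset.sum_add]; abel, ?_⟩
  have hr : C * N (r₁ + r₂) ≤ C * N r₁ + C * N r₂ := by
    rw [← mul_add]; exact mul_le_mul_of_nonneg_left (map_add_le_add N r₁ r₂) hC
  simp only [Multiset.map_add, Multiset.sum_add]
  linarith

lemma smul_decompCosts_subset (hb : IsSchauderBasis e coord) (hmono : IsCoordMonotone coord N)
    (hC : 0 ≤ C) {x y : X} {T : ℝ} (hT : 0 ≤ T) (h : ∀ i, |coord i y| ≤ T * |coord i x|) :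
    T • decompCosts e N C x ⊆ decompCosts e N C y := by
  choose t hyt ht using fun i => exists_eq_mul_and_abs_le hT (h i)
  rintro _ ⟨c, ⟨r, l, rfl, hc⟩, rfl⟩
  set l' := l.map (Atom.mulCoeff · t ht)
  refine ⟨y - (l'.map (Atom.vec e)).sum, l', by abel, ?_⟩
  have hr : N (y - (l'.map (Atom.vec e)).sum) ≤ T * N r := by
    refine hmono.le_mul hT fun i => ?_
    rw [map_sub, hyt, map_add, map_multiset_sum, map_multiset_sum]
    simp only [l', Multiset.map_map, Function.comp_def, Atom.coord_mulCoeff_vec _ hb,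
      Multiset.sum_map_mul_left]
    rw [mul_add, add_sub_cancel_right, abs_mul]
    exact mul_le_mul_of_nonneg_right (ht i) (abs_nonneg _)
  have hcost : (l'.map (Atom.cost e N)).sum = T * (l.map (Atom.cost e N)).sum := by
    simp only [l', Multiset.map_map, Function.comp_def, Atom.cost_mulCoeff,
      Multiset.sum_map_mul_left]
  rw [hcost]
  show _ ≤ T * c
  nlinarith [mul_le_mul_of_nonneg_left hr hC, mul_le_mul_of_nonneg_left hc hT]

lemma decompNorm_add_le (hb : IsSchauderBasis e coord) (hmono : IsCoordMonotone coord N)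
    (hdem : IsDemocraticWith e N D) (hC : 1 ≤ C) (x y : X) :
    decompNorm e N C (x + y) ≤ decompNorm e N C x + decompNorm e N C y := by
  have hbdd := bddBelow_decompCosts hb hmono hdem hC
  rw [decompNorm, decompNorm, decompNorm, ← csInf_add ⟨_, mul_mem_decompCosts x⟩ (hbdd x)
    ⟨_, mul_mem_decompCosts y⟩ (hbdd y)]
  exact csInf_le_csInf (hbdd _) (Set.add_nonempty.2 ⟨⟨_, mul_mem_decompCosts x⟩,
    ⟨_, mul_mem_decompCosts y⟩⟩) (decompCosts_add_subset (zero_le_one.trans hC) x y)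

lemma decompNorm_le_mul (hb : IsSchauderBasis e coord) (hmono : IsCoordMonotone coord N)
    (hdem : IsDemocraticWith e N D) (hC : 1 ≤ C) {x y : X} {T : ℝ} (hT : 0 ≤ T)
    (h : ∀ i, |coord i y| ≤ T * |coord i x|) :
    decompNorm e N C y ≤ T * decompNorm e N C x := by
  rw [decompNorm, decompNorm, ← smul_eq_mul, ← Real.sInf_smul_of_nonneg hT]
  exact csInf_le_csInf (bddBelow_decompCosts hb hmono hdem hC y)
    (Set.Nonempty.smul_set ⟨_, mul_mem_decompCosts x⟩)
    (smul_decompCosts_subset hb hmono (zero_le_one.trans hC) hT h)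

noncomputable def decompSeminorm (hb : IsSchauderBasis e coord)
    (hmono : IsCoordMonotone coord N) (hdem : IsDemocraticWith e N D) (hC : 1 ≤ C) :
    Seminorm ℝ X :=
  Seminorm.ofSMulLE (decompNorm e N C)
    (le_antisymm (by simpa using decompNorm_le_mul_seminorm hb hmono hdem hC 0)
      (by simpa using seminorm_le_decompNorm hb hmono hdem hC 0))
    (decompNorm_add_le hb hmono hdem hC)
    (fun a x => decompNorm_le_mul hb hmono hdem hC (norm_nonneg a) (by simp [abs_mul]))

@[simp]
lemma decompSeminorm_apply (hb : IsSchauderBasis e coord) (hmono : IsCoordMonotone coord N)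
    (hdem : IsDemocraticWith e N D) (hC : 1 ≤ C) (x : X) :
    decompSeminorm hb hmono hdem hC x = decompNorm e N C x :=
  rfl

end DecompositionNorm

section FlatVectors

variable {X : Type*} [NormedAddCommGroup X] [NormedSpace ℝ X] {e : ℕ → X}
  {coord : ℕ → X →L[ℝ] ℝ} {N : Seminorm ℝ X} {C D : ℝ}

lemma decompNorm_sum_le_fundFn (hb : IsSchauderBasis e coord) (hmono : IsCoordMonotone coord N)
    (hdem : IsDemocraticWith e N D) (hC : 1 ≤ C) (A : Finset ℕ) :
    decompNorm e N C (∑ i ∈ A, e i) ≤ fundFn e N A.card := by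
  refine csInf_le (bddBelow_decompCosts hb hmono hdem hC _)
    ⟨0, {⟨1, A, 1, fun _ => by simp⟩}, by simp [Atom.vec], by simp [Atom.cost]⟩

lemma abs_coord_sum_vec_le (hb : IsSchauderBasis e coord) (l : Multiset Atom) (j : ℕ) :
    |coord j (l.map (Atom.vec e)).sum| ≤
      (l.map fun p => if j ∈ p.supp then p.height else 0).sum := by
  rw [map_multiset_sum, Multiset.map_map]
  refine Multiset.abs_sum_le_sum_abs.trans ?_
  rw [Multiset.map_map]
  exact Multiset.sum_map_le_sum_map _ _ fun p _ => p.abs_coord_vec_le hb j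

lemma sum_sum_ite_height (l : Multiset Atom) (S : Finset ℕ) :
    ∑ j ∈ S, (l.map fun p => if j ∈ p.supp then p.height else 0).sum =
      (l.map fun p => p.height * ((p.supp ∩ S).card : ℝ)).sum := by
  rw [Finset.sum_eq_multiset_sum, Multiset.sum_map_sum_map]
  refine congrArg Multiset.sum (Multiset.map_congr rfl fun p _ => ?_)
  rw [← Finset.sum_eq_multiset_sum, Finset.sum_ite_mem, Finset.sum_const, Finset.inter_comm,
    nsmul_eq_mul, mul_comm]

lemma mul_card_mul_fundFn_le (hb : IsSchauderBasis e coord) (hdem : IsDemocraticWith e N D)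
    {B S : Finset ℕ} (hS : S ⊆ B) {r : X} {l : Multiset Atom}
    (hx : ∑ i ∈ B, e i = r + (l.map (Atom.vec e)).sum) {δ : ℝ}
    (hr : ∀ i ∈ S, |coord i r| ≤ δ) :
    (1 - δ) * S.card * fundFn e N B.card ≤ B.card * (l.map (Atom.cost e N)).sum := by
  have hcover : ∀ j ∈ S, 1 - δ ≤ (l.map fun p => if j ∈ p.supp then p.height else 0).sum := by
    intro j hj
    have hj' := congrArg (coord j) hx
    rw [hb.coord_sum_one, if_pos (hS hj), map_add] at hj'
    have := abs_coord_sum_vec_le hb l j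
    rw [show coord j (l.map (Atom.vec e)).sum = 1 - coord j r by linarith] at this
    linarith [hr j hj, abs_sub_abs_le_abs_sub 1 (coord j r), abs_one (α := ℝ)]
  have hatom : ∀ p ∈ l, p.height * ((p.supp ∩ S).card : ℝ) * fundFn e N B.card ≤
      B.card * p.cost e N := by
    intro p _
    have hk : (p.supp ∩ S).card ≤ B.card :=
      Finset.card_le_card (Finset.inter_subset_right.trans hS)
    calc p.height * (p.supp ∩ S).card * fundFn e N B.card
        = p.height * ((p.supp ∩ S).card * fundFn e N B.card) := by ring
      _ ≤ p.height * (B.card * fundFn e N (p.supp ∩ S).card) :=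
        mul_le_mul_of_nonneg_left (natCast_mul_fundFn_le hdem hk) p.height_nonneg
      _ ≤ p.height * (B.card * fundFn e N p.supp.card) :=
        mul_le_mul_of_nonneg_left (mul_le_mul_of_nonneg_left
          (fundFn_mono hdem (Finset.card_le_card Finset.inter_subset_left)) (Nat.cast_nonneg _))
          p.height_nonneg
      _ = B.card * p.cost e N := by rw [Atom.cost]; ring
  calc (1 - δ) * S.card * fundFn e N B.card = (∑ _j ∈ S, (1 - δ)) * fundFn e N B.card := by
        rw [Finset.sum_const, nsmul_eq_mul, mul_comm (S.card : ℝ)]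
    _ ≤ (∑ j ∈ S, (l.map fun p => if j ∈ p.supp then p.height else 0).sum) *
        fundFn e N B.card :=
      mul_le_mul_of_nonneg_right (Finset.sum_le_sum hcover) (fundFn_nonneg hdem _)
    _ = (l.map fun p => p.height * ((p.supp ∩ S).card : ℝ) * fundFn e N B.card).sum := by
      rw [sum_sum_ite_height, ← Multiset.sum_map_mul_right]
    _ ≤ (l.map fun p => (B.card : ℝ) * p.cost e N).sum := Multiset.sum_map_le_sum_map _ _ hatom
    _ = B.card * (l.map (Atom.cost e N)).sum := Multiset.sum_map_mul_left

lemma card_mul_fundFn_le (hb : IsSchauderBasis e coord) (hmono : IsCoordMonotone coord N)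
    (hdem : IsDemocraticWith e N D) (hD : 0 ≤ D) {B B' : Finset ℕ} (hB' : B' ⊆ B) {r : X}
    {δ : ℝ} (hδ : 0 < δ) (hDC : D ≤ δ * C) (hr : ∀ i ∈ B', δ ≤ |coord i r|) :
    B'.card * fundFn e N B.card ≤ B.card * (C * N r) := by
  have hB'r : N (∑ i ∈ B', e i) ≤ δ⁻¹ * N r := by
    refine hmono.le_mul (inv_nonneg.2 hδ.le) fun i => ?_
    rw [hb.coord_sum_one]
    split_ifs with hi
    · rw [abs_one, le_inv_mul_iff₀ hδ, mul_one]
      exact hr i hi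
    · simp only [abs_zero]
      positivity
  have hfund : fundFn e N B'.card ≤ C * N r :=
    calc fundFn e N B'.card ≤ D * N (∑ i ∈ B', e i) := fundFn_le_mul hdem le_rfl
      _ ≤ D * (δ⁻¹ * N r) := mul_le_mul_of_nonneg_left hB'r hD
      _ ≤ C * N r := by
        rw [← mul_assoc]
        refine mul_le_mul_of_nonneg_right ?_ (apply_nonneg N r)
        rwa [mul_inv_le_iff₀ hδ, mul_comm]
  calc B'.card * fundFn e N B.card ≤ B.card * fundFn e N B'.card :=
        natCast_mul_fundFn_le hdem (Finset.card_le_card hB')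
    _ ≤ B.card * (C * N r) := mul_le_mul_of_nonneg_left hfund (Nat.cast_nonneg _)

lemma mul_fundFn_le_decompNorm (hb : IsSchauderBasis e coord) (hmono : IsCoordMonotone coord N)
    (hdem : IsDemocraticWith e N D) (hD : 0 ≤ D) (hC : 1 ≤ C) {δ : ℝ} (hδ : 0 < δ)
    (hDC : D ≤ δ * C) (B : Finset ℕ) :
    (1 - δ) * fundFn e N B.card ≤ decompNorm e N C (∑ i ∈ B, e i) := by
  classical
  refine le_csInf ⟨_, mul_mem_decompCosts _⟩ fun c hc => ?_
  rcases B.eq_empty_or_nonempty with rfl | hBne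
  · simpa [fundFn_zero hdem] using
      (apply_nonneg N _).trans (seminorm_le_of_mem_decompCosts hb hmono hdem hC hc)
  obtain ⟨r, l, hx, hcost⟩ := hc
  set large := {i ∈ B | δ ≤ |coord i r|}
  set small := {i ∈ B | ¬δ ≤ |coord i r|}
  set φ := fundFn e N B.card
  have hlarge : (large.card : ℝ) * φ ≤ B.card * (C * N r) :=
    card_mul_fundFn_le hb hmono hdem hD (Finset.filter_subset _ B) hδ hDC
      fun i hi => (Finset.mem_filter.1 hi).2
  have hsmall : (1 - δ) * small.card * φ ≤ B.card * (l.map (Atom.cost e N)).sum :=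
    mul_card_mul_fundFn_le hb hdem (Finset.filter_subset _ B) hx
      fun i hi => (not_le.1 (Finset.mem_filter.1 hi).2).le
  have hcard : (large.card : ℝ) + small.card = B.card := by
    exact_mod_cast Finset.card_filter_add_card_filter_not _
  have hB : (0 : ℝ) < B.card := by exact_mod_cast hBne.card_pos
  refine le_of_mul_le_mul_left ?_ hB
  have hφ : 0 ≤ δ * large.card * φ := by have := fundFn_nonneg hdem B.card; positivity
  linear_combination hlarge + hsmall + (B.card : ℝ) * hcost + hφ - (1 - δ) * φ * hcard

end FlatVectors

section Renorming

variable {X : Type*} [NormedAddCommGroup X] [NormedSpace ℝ X] {e : ℕ → X}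
  {coord : ℕ → X →L[ℝ] ℝ} {N : Seminorm ℝ X} {C D : ℝ}

lemma decompNorm_apply_e (hb : IsSchauderBasis e coord) (hmono : IsCoordMonotone coord N)
    (hdem : IsDemocraticWith e N D) (hnorm : IsNormalizedWith e N) (hC : 1 ≤ C) (j : ℕ) :
    decompNorm e N C (e j) = 1 := by
  refine le_antisymm ?_ (by simpa [hnorm j] using seminorm_le_decompNorm hb hmono hdem hC (e j))
  simpa [fundFn_one hdem hnorm] using decompNorm_sum_le_fundFn hb hmono hdem hC {j}

lemma isCoordMonotone_decompSeminorm (hb : IsSchauderBasis e coord)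
    (hmono : IsCoordMonotone coord N) (hdem : IsDemocraticWith e N D) (hC : 1 ≤ C) :
    IsCoordMonotone coord (decompSeminorm hb hmono hdem hC) := fun x y h => by
  simpa using decompNorm_le_mul hb hmono hdem hC zero_le_one (by simpa using h)

theorem exists_renorming_of_isCoordMonotone (hb : IsSchauderBasis e coord)
    (hmono : IsCoordMonotone coord N) (hnorm : IsNormalizedWith e N) (hequiv : IsEquivNorm N)
    (hdem : IsDemocraticWith e N D) {ε : ℝ} (hε : 0 < ε) :
    ∃ nn : X → ℝ, IsEquivNorm nn ∧ IsNormalizedWith e nn ∧ IsUnconditionalWith e nn 1 ∧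
      IsDemocraticWith e nn (1 + ε) := by
  have hD : 1 ≤ D := by simpa [hnorm 0] using hdem {0} {0} le_rfl
  set δ := ε / (1 + ε)
  have hδ : 0 < δ := by positivity
  have hεδ : (1 + ε) * (1 - δ) = 1 := by simp only [δ]; field_simp; ring
  set C := max 1 (D / δ)
  have hC : 1 ≤ C := le_max_left _ _
  have hDC : D ≤ δ * C := by rw [← div_le_iff₀' hδ]; exact le_max_right _ _
  obtain ⟨-, -, a, b, ha, hab⟩ := hequiv
  refine ⟨decompSeminorm hb hmono hdem hC, Seminorm.isEquivNorm _ (b := C * b) ha fun x => ⟨?_, ?_⟩,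
    decompNorm_apply_e hb hmono hdem hnorm hC,
    (isCoordMonotone_decompSeminorm hb hmono hdem hC).isUnconditionalWith_one hb,
    fun A B hAB => ?_⟩
  · exact (hab x).1.trans (seminorm_le_decompNorm hb hmono hdem hC x)
  · rw [decompSeminorm_apply, mul_assoc]
    exact (decompNorm_le_mul_seminorm hb hmono hdem hC x).trans
      (mul_le_mul_of_nonneg_left (hab x).2 (by positivity))
  · simp only [decompSeminorm_apply]
    calc decompNorm e N C (∑ i ∈ A, e i) ≤ fundFn e N A.card :=
          decompNorm_sum_le_fundFn hb hmono hdem hC A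
      _ ≤ fundFn e N B.card := fundFn_mono hdem hAB
      _ = (1 + ε) * ((1 - δ) * fundFn e N B.card) := by rw [← mul_assoc, hεδ, one_mul]
      _ ≤ (1 + ε) * decompNorm e N C (∑ i ∈ B, e i) := mul_le_mul_of_nonneg_left
          (mul_fundFn_le_decompNorm hb hmono hdem (by linarith) hC hδ hDC B) (by positivity)

end Renorming

theorem renorming_one_plus_eps_democratic_general
    {X : Type*} [NormedAddCommGroup X] [NormedSpace ℝ X]
    (e : ℕ → X) (coord : ℕ → X →L[ℝ] ℝ)
    (hbasis : IsSchauderBasis e coord)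
    (huncond : ∃ K : ℝ, IsUnconditionalWith e (fun x => ‖x‖) K)
    (hdem : ∃ Δ : ℝ, IsDemocraticWith e (fun x => ‖x‖) Δ)
    (ε : ℝ) (hε : 0 < ε) :
    ∃ nn : X → ℝ, IsEquivNorm nn ∧
      IsNormalizedWith e nn ∧
      IsUnconditionalWith e nn 1 ∧
      IsDemocraticWith e nn (1 + ε) := by
  obtain ⟨K, hK⟩ := huncond
  obtain ⟨Δ, hΔ⟩ := hdem
  have he₀ : 0 < ‖e 0‖ := norm_pos_iff.2 (hbasis.ne_zero 0)
  have hΔ₀ : 0 < Δ := pos_of_mul_pos_left (he₀.trans_le (hΔ.norm_le 0 0)) (norm_nonneg _)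
  have hlo : ∀ i, ‖e 0‖ / Δ ≤ ‖e i‖ := fun i => by
    rw [div_le_iff₀ hΔ₀, mul_comm]; exact hΔ.norm_le 0 i
  have hbdd := bddAbove_latticeHullSet hbasis hK (by positivity) hlo
  set N := latticeHullSeminorm e coord hbdd
  have hequiv : IsEquivNorm N := N.isEquivNorm (inv_pos.2 (mul_pos hΔ₀ he₀)) fun x =>
    ⟨(inv_mul_le_iff₀ (mul_pos hΔ₀ he₀)).2
        (norm_le_mul_latticeHull hbasis (hbdd x) (mul_pos hΔ₀ he₀) (hΔ.norm_le · 0)),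
      latticeHull_le_mul_norm hbasis hK (by positivity) hlo x⟩
  obtain ⟨D, hD⟩ := hΔ.exists_of_isEquivNorm hequiv
  exact exists_renorming_of_isCoordMonotone hbasis (isCoordMonotone_latticeHullSeminorm hbdd)
    (fun j => latticeHull_apply_e hbasis (hbdd _)) hequiv hD hε

/-- if `(e_i)` is an unconditional and democratic Schauder basis of a
Banach space `X`, then for every `ε > 0` there is an equivalent norm on `X` w.r.t. which
`(e_i)` is normalized, `1`-unconditional and `(1+ε)`-democratic. -/
theorem renorming_one_plus_eps_democratic
    {X : Type*} [NormedAddCommGroup X] [NormedSpace ℝ X] [CompleteSpace X]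
    (e : ℕ → X) (coord : ℕ → X →L[ℝ] ℝ)
    (hbasis : IsSchauderBasis e coord)
    (huncond : ∃ K : ℝ, IsUnconditionalWith e (fun x => ‖x‖) K)
    (hdem : ∃ Δ : ℝ, IsDemocraticWith e (fun x => ‖x‖) Δ)
    (ε : ℝ) (hε : 0 < ε) :
    ∃ nn : X → ℝ, IsEquivNorm nn ∧
      IsNormalizedWith e nn ∧
      IsUnconditionalWith e nn 1 ∧
      IsDemocraticWith e nn (1 + ε) :=
  renorming_one_plus_eps_democratic_general e coord hbasis huncond hdem ε hε
end

section
/- Let (e_i) be a Schauder basis of a Banach space X with norm ‖·‖, and suppose there exists a constant C ≥ 1 such that for every ε > 0 there is a norm ‖·‖_ε on X, C-equivalent to ‖·‖, with respect to which (e_i) is normalized and (1+ε)-democratic. Then there exists a norm on X, C-equivalent to ‖·‖, with respect to which (e_i) is 1-democratic. (Consequently, for greedy bases that admit no 1-democratic renorming — such as the Haar system of dyadic H_1 or unconditional bases of Tsirelson's space — the equivalence constant of any (1+ε)-democratic renorming must tend to infinity as ε → 0.) -/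
open scoped BigOperators

/-- if a Schauder basis `(e_i)` of `X` admits, for every `ε > 0`, a
`C`-equivalent norm in which it is normalized and `(1+ε)`-democratic (with `C`
independent of `ε`), then it admits a `C`-equivalent norm in which it is
`1`-democratic. -/
theorem one_democratic_renorming_of_uniformly_equivalent
    {X : Type*} [NormedAddCommGroup X] [NormedSpace ℝ X] [CompleteSpace X]
    (e : ℕ → X) (coord : ℕ → X →L[ℝ] ℝ)
    (hbasis : IsSchauderBasis e coord)
    (C : ℝ) (hC : 1 ≤ C)
    (h : ∀ ε : ℝ, 0 < ε → ∃ nn : X → ℝ,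
      (∀ x y : X, nn (x + y) ≤ nn x + nn y) ∧
      (∀ (a : ℝ) (x : X), nn (a • x) = |a| * nn x) ∧
      (∀ x : X, (1 / C) * ‖x‖ ≤ nn x ∧ nn x ≤ C * ‖x‖) ∧
      IsNormalizedWith e nn ∧
      IsDemocraticWith e nn (1 + ε)) :
    ∃ nn : X → ℝ,
      (∀ x y : X, nn (x + y) ≤ nn x + nn y) ∧
      (∀ (a : ℝ) (x : X), nn (a • x) = |a| * nn x) ∧
      (∀ x : X, (1 / C) * ‖x‖ ≤ nn x ∧ nn x ≤ C * ‖x‖) ∧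
      IsDemocraticWith e nn 1 := by
  classical
  -- choose a sequence of norms with ε = 1/(k+1)
  choose f htri hhom hbd hnorm hdem using
    fun k : ℕ => h (1 / ((k : ℝ) + 1)) (by positivity)
  have hCpos : (0 : ℝ) < C := lt_of_lt_of_le one_pos hC
  -- basic bounds
  have hub : ∀ (x : X) (k : ℕ), f k x ≤ C * ‖x‖ := fun x k => (hbd k x).2
  have hlb : ∀ (x : X) (k : ℕ), (1 / C) * ‖x‖ ≤ f k x := fun x k => (hbd k x).1
  have hnn : ∀ (x : X) (k : ℕ), 0 ≤ f k x := fun x k =>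
    le_trans (by positivity) (hlb x k)
  have hbdd : ∀ x : X, Filter.IsBoundedUnder (· ≤ ·) Filter.atTop (fun k => f k x) :=
    fun x => Filter.isBoundedUnder_of ⟨C * ‖x‖, hub x⟩
  have hbddge : ∀ x : X, Filter.IsBoundedUnder (· ≥ ·) Filter.atTop (fun k => f k x) :=
    fun x => Filter.isBoundedUnder_of ⟨0, hnn x⟩
  have hcob : ∀ x : X, Filter.IsCoboundedUnder (· ≤ ·) Filter.atTop (fun k => f k x) :=
    fun x => Filter.isCoboundedUnder_le_of_le Filter.atTop (hnn x)
  refine ⟨fun x => Filter.limsup (fun k => f k x) Filter.atTop, ?_, ?_, ?_, ?_⟩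
  · -- triangle inequality
    intro x y
    calc Filter.limsup (fun k => f k (x + y)) Filter.atTop
        ≤ Filter.limsup ((fun k => f k x) + fun k => f k y) Filter.atTop := by
          refine Filter.limsup_le_limsup (Filter.Eventually.of_forall fun k => htri k x y)
            (Filter.isCoboundedUnder_le_of_le Filter.atTop (hnn (x + y))) ?_
          exact Filter.isBoundedUnder_of ⟨C * ‖x‖ + C * ‖y‖, fun k =>
            add_le_add (hub x k) (hub y k)⟩
      _ ≤ Filter.limsup (fun k => f k x) Filter.atTop
            + Filter.limsup (fun k => f k y) Filter.atTop :=
          limsup_add_le (hbddge x) (hbdd x) (hcob y) (hbdd y)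
  · -- homogeneity
    intro a x
    have heq : (fun k => f k (a • x)) = fun k => |a| * f k x := by
      funext k; exact hhom k a x
    show Filter.limsup (fun k => f k (a • x)) Filter.atTop = _
    rw [heq]
    have := (Monotone.map_limsup_of_continuousAt (F := Filter.atTop)
      (f := fun t : ℝ => |a| * t)
      (fun s t hst => mul_le_mul_of_nonneg_left hst (abs_nonneg a))
      (fun k => f k x) (by fun_prop) (hbdd x) (hcob x))
    exact this.symm
  · -- equivalence bounds
    intro x
    constructor
    · refine Filter.le_limsup_of_le (hbdd x) fun b hb => ?_
      obtain ⟨k, hk⟩ := hb.exists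
      exact le_trans (hlb x k) hk
    · exact Filter.limsup_le_of_le (hcob x) (Filter.Eventually.of_forall (hub x))
  · -- 1-democracy
    intro A B hAB
    rw [one_mul]
    set xA := ∑ i ∈ A, e i
    set xB := ∑ i ∈ B, e i
    have hpt : ∀ k : ℕ, f k xA ≤ f k xB + (1 / ((k : ℝ) + 1)) * (C * ‖xB‖) := by
      intro k
      have h1 : f k xA ≤ (1 + 1 / ((k : ℝ) + 1)) * f k xB := hdem k A B hAB
      have h2 : (1 / ((k : ℝ) + 1)) * f k xB ≤ (1 / ((k : ℝ) + 1)) * (C * ‖xB‖) := by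
        apply mul_le_mul_of_nonneg_left (hub xB k) (by positivity)
      nlinarith [hnn xB k]
    have hg0 : Filter.Tendsto (fun k : ℕ => (1 / ((k : ℝ) + 1)) * (C * ‖xB‖))
        Filter.atTop (nhds 0) := by
      have := tendsto_one_div_add_atTop_nhds_zero_nat.mul_const (C * ‖xB‖)
      simpa using this
    have hglimsup : Filter.limsup (fun k : ℕ => (1 / ((k : ℝ) + 1)) * (C * ‖xB‖))
        Filter.atTop = 0 := hg0.limsup_eq
    calc Filter.limsup (fun k => f k xA) Filter.atTop
        ≤ Filter.limsup ((fun k => f k xB)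
            + fun k : ℕ => (1 / ((k : ℝ) + 1)) * (C * ‖xB‖)) Filter.atTop := by
          refine Filter.limsup_le_limsup (Filter.Eventually.of_forall hpt)
            (Filter.isCoboundedUnder_le_of_le Filter.atTop (hnn xA)) ?_
          refine Filter.isBoundedUnder_of ⟨C * ‖xB‖ + 1 * (C * ‖xB‖), fun k => ?_⟩
          · exact add_le_add (hub xB k) (by
            have : (1 / ((k : ℝ) + 1)) * (C * ‖xB‖) ≤ 1 * (C * ‖xB‖) := by
              apply mul_le_mul_of_nonneg_right _ (by positivity)
              rw [div_le_one (by positivity)]; linarith [Nat.cast_nonneg (α := ℝ) k]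
            exact this)
      _ ≤ Filter.limsup (fun k => f k xB) Filter.atTop
            + Filter.limsup (fun k : ℕ => (1 / ((k : ℝ) + 1)) * (C * ‖xB‖))
                Filter.atTop := by
          refine limsup_add_le (hbddge xB) (hbdd xB) ?_ ?_
          · exact Filter.isCoboundedUnder_le_of_le Filter.atTop fun k => by positivity
          · refine Filter.isBoundedUnder_of ⟨1 * (C * ‖xB‖), fun k => ?_⟩
            apply mul_le_mul_of_nonneg_right _ (by positivity)
            rw [div_le_one (by positivity)]; linarith [Nat.cast_nonneg (α := ℝ) k]
      _ = Filter.limsup (fun k => f k xB) Filter.atTop := by rw [hglimsup, add_zero]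
end
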